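/- Let C₁ > 0 and C₂ > 0, and let √ denote the principal complex square root. Then for every complex s not lying in the real ray (−∞, −1/C₁] and with s ≠ −1/ξ_p (where ξ_p := (C₁ + √(C₁² + 4C₂²))/2), one has C₂s + √(1 + C₁s) ≠ 0; consequently P^D(s) := C₂/(C₂s + √(1 + C₁s)) is complex-differentiable (holomorphic) on ℂ ∖ ((−∞, −1/C₁] ∪ {−1/ξ_p}). Moreover C₂·(−1/ξ_p) + √(1 + C₁·(−1/ξ_p)) = 0, so s = −1/ξ_p is an actual singularity of P^D. -/

import Mathlib

/-!
Squaring `C₂ s + √(1 + C₁ s) = 0` gives `C₂² s² - C₁ s - 1 = 0`, whose roots are `ξ_p / C₂²` and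
`-1 / ξ_p` because `ξ_p² = C₁ ξ_p + C₂²`. Both roots are real, and at a real root
`√(1 + C₁ s) = √((C₂ s)²) = |C₂ s|`, so the sum vanishes exactly at the negative root `-1 / ξ_p`.
Off the cut, `1 + C₁ s` lies in the slit plane, where the principal square root is holomorphic.
-/

/-- The principal branch of the complex square root. -/
noncomputable def csqrt (z : ℂ) : ℂ := z ^ (1/2 : ℂ)

/-- The pole location ξ_p of the JKD function R^D. -/
noncomputable def xip (C₁ C₂ : ℝ) : ℝ := (C₁ + Real.sqrt (C₁ ^ 2 + 4 * C₂ ^ 2)) / 2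

/-- The transformed JKD dynamic permeability. -/
noncomputable def PD (C₁ C₂ : ℝ) (s : ℂ) : ℂ :=
  (C₂ : ℂ) / ((C₂ : ℂ) * s + csqrt (1 + (C₁ : ℂ) * s))

/-- The branch-cut ray (−∞, −1/C₁] viewed inside ℂ. -/
def cutRay (C₁ : ℝ) : Set ℂ := {z : ℂ | z.im = 0 ∧ z.re ≤ -1 / C₁}

open Complex

lemma csqrt_mul_self (z : ℂ) : csqrt z * csqrt z = z := by
  rcases eq_or_ne z 0 with rfl | hz
  · simp [csqrt]
  · rw [csqrt, ← cpow_add _ _ hz]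
    norm_num

lemma csqrt_ofReal {x : ℝ} (hx : 0 ≤ x) : csqrt x = Real.sqrt x := by
  rw [csqrt, Real.sqrt_eq_rpow, show (1 / 2 : ℂ) = ((1 / 2 : ℝ) : ℂ) by norm_num, ofReal_cpow hx]

lemma csqrt_sq_ofReal (x : ℝ) : csqrt ((x : ℂ) ^ 2) = |x| := by
  rw [← ofReal_pow, csqrt_ofReal (sq_nonneg x), Real.sqrt_sq_eq_abs]

lemma differentiableAt_csqrt {z : ℂ} (hz : z ∈ slitPlane) : DifferentiableAt ℂ csqrt z :=
  differentiableAt_id.cpow_const hz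

lemma xip_sq (C₁ C₂ : ℝ) : xip C₁ C₂ ^ 2 = C₁ * xip C₁ C₂ + C₂ ^ 2 := by
  have h := Real.sq_sqrt (by positivity : 0 ≤ C₁ ^ 2 + 4 * C₂ ^ 2)
  unfold xip
  linear_combination h / 4

lemma xip_pos (C₁ : ℝ) {C₂ : ℝ} (hC₂ : C₂ ≠ 0) : 0 < xip C₁ C₂ := by
  have h : |C₁| < Real.sqrt (C₁ ^ 2 + 4 * C₂ ^ 2) := by
    rw [Real.lt_sqrt (abs_nonneg C₁), sq_abs]
    have : 0 < C₂ ^ 2 := by positivity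
    linarith
  unfold xip
  linarith [neg_abs_le C₁]

lemma one_add_mul_eq_sq_iff (C₁ : ℝ) {C₂ : ℝ} (hC₂ : C₂ ≠ 0) (s : ℂ) :
    1 + C₁ * s = (C₂ * s) ^ 2 ↔
      s = ((xip C₁ C₂ / C₂ ^ 2 : ℝ) : ℂ) ∨ s = ((-1 / xip C₁ C₂ : ℝ) : ℂ) := by
  set r := xip C₁ C₂
  have hr : (r : ℂ) ≠ 0 := ofReal_ne_zero.2 (xip_pos C₁ hC₂).ne'
  have hC₂' : (C₂ : ℂ) ^ 2 ≠ 0 := pow_ne_zero 2 (ofReal_ne_zero.2 hC₂)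
  have hr_sq : (r : ℂ) ^ 2 = C₁ * r + C₂ ^ 2 := by exact_mod_cast xip_sq C₁ C₂
  have factor : (r : ℂ) * ((C₂ * s) ^ 2 - (1 + C₁ * s)) = (C₂ ^ 2 * s - r) * (r * s + 1) := by
    linear_combination s * hr_sq
  rw [eq_comm, ← sub_eq_zero, ← mul_right_inj' hr, mul_zero, factor, mul_eq_zero]
  push_cast
  refine or_congr ?_ ?_
  · rw [sub_eq_zero, eq_div_iff hC₂', mul_comm]
  · rw [eq_div_iff hr, mul_comm, add_eq_zero_iff_eq_neg]

theorem add_csqrt_eq_zero_iff (C₁ : ℝ) {C₂ : ℝ} (hC₂ : 0 < C₂) (s : ℂ) :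
    C₂ * s + csqrt (1 + C₁ * s) = 0 ↔ s = ((-1 / xip C₁ C₂ : ℝ) : ℂ) := by
  have hr := xip_pos C₁ hC₂.ne'
  have at_real_root (x : ℝ) (hx : 1 + C₁ * (x : ℂ) = (C₂ * x) ^ 2) :
      C₂ * x + csqrt (1 + C₁ * x) = 0 ↔ x ≤ 0 := by
    rw [hx, ← ofReal_mul, csqrt_sq_ofReal, ← ofReal_add, ofReal_eq_zero,
      add_eq_zero_iff_neg_eq, eq_comm, abs_eq_neg_self]
    simp [mul_nonpos_iff_pos_imp_nonpos, hC₂, hC₂.le]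
  have roots := one_add_mul_eq_sq_iff C₁ hC₂.ne'
  constructor
  · intro h
    have hsq : 1 + C₁ * s = (C₂ * s) ^ 2 := by
      rw [← csqrt_mul_self (1 + C₁ * s), eq_neg_of_add_eq_zero_right h]
      ring
    rcases (roots s).1 hsq with rfl | rfl
    · have := (at_real_root _ hsq).1 h
      exact absurd this (not_le.2 (by positivity))
    · rfl
  · rintro rfl
    exact (at_real_root _ ((roots _).2 (Or.inr rfl))).2
      (div_nonpos_of_nonpos_of_nonneg (by norm_num) hr.le)

lemma one_add_mul_mem_slitPlane {C₁ : ℝ} (hC₁ : 0 < C₁) {s : ℂ} (hs : s ∉ cutRay C₁) :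
    1 + C₁ * s ∈ slitPlane := by
  rw [mem_slitPlane_iff]
  simp only [cutRay, Set.mem_ofPred_eq, not_and_or, not_le] at hs
  rcases hs with him | hre
  · right
    simpa [hC₁.ne'] using him
  · left
    rw [div_lt_iff₀ hC₁] at hre
    rw [add_re, one_re, re_ofReal_mul]
    linarith

lemma differentiableAt_PD {C₁ C₂ : ℝ} (hC₁ : 0 < C₁) {s : ℂ} (hs : s ∉ cutRay C₁)
    (hden : C₂ * s + csqrt (1 + C₁ * s) ≠ 0) : DifferentiableAt ℂ (PD C₁ C₂) s := by
  have := differentiableAt_csqrt (one_add_mul_mem_slitPlane hC₁ hs)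
  unfold PD
  fun_prop (disch := exact hden)

theorem stmt7 (C₁ C₂ : ℝ) (hC₁ : 0 < C₁) (hC₂ : 0 < C₂) :
    (∀ s : ℂ, s ∉ cutRay C₁ → s ≠ ((-1 / xip C₁ C₂ : ℝ) : ℂ) →
      (C₂ : ℂ) * s + csqrt (1 + (C₁ : ℂ) * s) ≠ 0) ∧
    DifferentiableOn ℂ (PD C₁ C₂) (cutRay C₁ ∪ {((-1 / xip C₁ C₂ : ℝ) : ℂ)})ᶜ ∧
    (C₂ : ℂ) * ((-1 / xip C₁ C₂ : ℝ) : ℂ) +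
      csqrt (1 + (C₁ : ℂ) * ((-1 / xip C₁ C₂ : ℝ) : ℂ)) = 0 := by
  have zero_iff := add_csqrt_eq_zero_iff C₁ hC₂
  refine ⟨fun s _ hs => (zero_iff s).not.2 hs, ?_, (zero_iff _).2 rfl⟩
  intro s hs
  simp only [Set.mem_compl_iff, Set.mem_union, Set.mem_singleton_iff, not_or] at hs
  exact (differentiableAt_PD hC₁ hs.1 ((zero_iff s).not.2 hs.2)).differentiableWithinAt
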